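/- Let c, d : ℝ² → ℝ be smooth functions of (θ, ψ) satisfying Condition A (2π-periodicity in ψ) and Condition B (∫₀^{2π} c(0,ψ) dψ = 0 and ∫₀^{2π} c(π,ψ) dψ = 0). Define on (0,π) × ℝ the functions l = ∂_θ c + 2c·cot θ + csc θ·∂_ψ d, l̄ = ∂_θ d + 2d·cot θ − csc θ·∂_ψ c, and G = ∂_θ l + l·cot θ + csc θ·∂_ψ l̄. Then the function θ ↦ sin θ · ∫₀^{2π} G(θ,ψ) cos θ dψ extends integrably to (0,π) and ∫₀^{π} ( ∫₀^{2π} G(θ,ψ) cos θ dψ ) sin θ dθ = 0. -/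

import Mathlib

open Real MeasureTheory

/-! ### Auxiliary lemmas on partial derivatives and parametric integrals -/

/-- First partial derivative as `fderiv` applied to `(1,0)`. -/
noncomputable def pd1 (f : ℝ × ℝ → ℝ) (p : ℝ × ℝ) : ℝ := fderiv ℝ f p (1, 0)

/-- Second partial derivative as `fderiv` applied to `(0,1)`. -/
noncomputable def pd2 (f : ℝ × ℝ → ℝ) (p : ℝ × ℝ) : ℝ := fderiv ℝ f p (0, 1)

lemma contDiff_pd1 {f : ℝ × ℝ → ℝ} (hf : ContDiff ℝ (⊤ : ℕ∞) f) : ContDiff ℝ (⊤ : ℕ∞) (pd1 f) :=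
  (hf.fderiv_right (by simp)).clm_apply contDiff_const

lemma contDiff_pd2 {f : ℝ × ℝ → ℝ} (hf : ContDiff ℝ (⊤ : ℕ∞) f) : ContDiff ℝ (⊤ : ℕ∞) (pd2 f) :=
  (hf.fderiv_right (by simp)).clm_apply contDiff_const

lemma hasDerivAt_sect1 {f : ℝ × ℝ → ℝ} (hf : Differentiable ℝ f) (θ ψ : ℝ) :
    HasDerivAt (fun t => f (t, ψ)) (pd1 f (θ, ψ)) θ :=
  (hf (θ, ψ)).hasFDerivAt.comp_hasDerivAt θ ((hasDerivAt_id θ).prodMk (hasDerivAt_const θ ψ))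

lemma hasDerivAt_sect2 {f : ℝ × ℝ → ℝ} (hf : Differentiable ℝ f) (θ ψ : ℝ) :
    HasDerivAt (fun s => f (θ, s)) (pd2 f (θ, ψ)) ψ :=
  (hf (θ, ψ)).hasFDerivAt.comp_hasDerivAt ψ ((hasDerivAt_const ψ θ).prodMk (hasDerivAt_id ψ))

/-- Clairaut's theorem for smooth functions in the `pd1`/`pd2` formulation. -/
lemma pd1_pd2_comm {f : ℝ × ℝ → ℝ} (hf : ContDiff ℝ (⊤ : ℕ∞) f) (p : ℝ × ℝ) :
    pd1 (pd2 f) p = pd2 (pd1 f) p := by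
  have hdf : DifferentiableAt ℝ (fderiv ℝ f) p :=
    ((hf.fderiv_right (m := (⊤ : ℕ∞)) (by simp)).differentiable (by simp)) p
  have h1 : pd1 (pd2 f) p = fderiv ℝ (fderiv ℝ f) p (1, 0) (0, 1) := by
    unfold pd1 pd2
    rw [fderiv_clm_apply hdf (differentiableAt_const _)]
    simp
  have h2 : pd2 (pd1 f) p = fderiv ℝ (fderiv ℝ f) p (0, 1) (1, 0) := by
    unfold pd1 pd2
    rw [fderiv_clm_apply hdf (differentiableAt_const _)]
    simp
  have hsym := (hf.contDiffAt (x := p)).isSymmSndFDerivAt (by norm_num; exact WithTop.coe_le_coe.2 (le_top : (2:ℕ∞) ≤ ⊤)) (1, 0) (0, 1)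
  rw [h1, h2, hsym]

/-- Differentiation under the interval integral sign for smooth integrands. -/
lemma hasDerivAt_param (f : ℝ × ℝ → ℝ) (hf : ContDiff ℝ (⊤ : ℕ∞) f) (b θ₀ : ℝ) :
    HasDerivAt (fun x => ∫ ψ in (0:ℝ)..b, f (x, ψ))
      (∫ ψ in (0:ℝ)..b, pd1 f (θ₀, ψ)) θ₀ := by
  have hK : IsCompact (Set.Icc (θ₀ - 1) (θ₀ + 1) ×ˢ Set.uIcc (0:ℝ) b) :=
    isCompact_Icc.prod isCompact_uIcc
  obtain ⟨M, hM⟩ := hK.exists_bound_of_continuousOn (contDiff_pd1 hf).continuous.continuousOn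
  have hcont : ∀ x : ℝ, Continuous fun ψ => f (x, ψ) :=
    fun x => hf.continuous.comp (continuous_const.prodMk continuous_id)
  have hcont' : ∀ x : ℝ, Continuous fun ψ => pd1 f (x, ψ) :=
    fun x => (contDiff_pd1 hf).continuous.comp (continuous_const.prodMk continuous_id)
  have := intervalIntegral.hasDerivAt_integral_of_dominated_loc_of_deriv_le
    (F := fun x ψ => f (x, ψ)) (F' := fun x ψ => pd1 f (x, ψ)) (x₀ := θ₀)
    (a := (0:ℝ)) (b := b) (μ := volume) (bound := fun _ => M) (s := Metric.ball θ₀ 1)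
    (Metric.ball_mem_nhds θ₀ one_pos)
    (Filter.Eventually.of_forall fun x => (hcont x).aestronglyMeasurable)
    ((hcont θ₀).intervalIntegrable 0 b)
    ((hcont' θ₀).aestronglyMeasurable)
    (Filter.Eventually.of_forall fun ψ hψ x hx => by
      have hmem : (x, ψ) ∈ Set.Icc (θ₀ - 1) (θ₀ + 1) ×ˢ Set.uIcc (0:ℝ) b := by
        constructor
        · have := abs_lt.1 (by simpa [Real.dist_eq] using Metric.mem_ball.1 hx)
          constructor <;> linarith [this.1, this.2]
        · exact Set.uIoc_subset_uIcc hψ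
      simpa using hM _ hmem)
    intervalIntegrable_const
    (Filter.Eventually.of_forall fun ψ hψ x hx =>
      hasDerivAt_sect1 (hf.differentiable (by simp)) x ψ)
  exact this.2

/-- The integral of the derivative of a smooth `2π`-periodic function vanishes. -/
lemma integral_deriv_periodic {g : ℝ → ℝ} (hg : ContDiff ℝ (⊤ : ℕ∞) g) (hper : g (2 * π) = g 0) :
    ∫ s in (0:ℝ)..(2 * π), deriv g s = 0 := by
  rw [intervalIntegral.integral_deriv_eq_sub
      (fun x _ => (hg.differentiable (by simp)).differentiableAt)
      ((hg.continuous_deriv (by simp)).intervalIntegrable _ _),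
    hper, sub_self]

lemma integral_pd2_periodic {f : ℝ × ℝ → ℝ} (hf : ContDiff ℝ (⊤ : ℕ∞) f) (θ : ℝ)
    (hper : f (θ, 2 * π) = f (θ, 0)) :
    ∫ ψ in (0:ℝ)..(2 * π), pd2 f (θ, ψ) = 0 := by
  have hg : ContDiff ℝ (⊤ : ℕ∞) (fun s => f (θ, s)) := hf.comp (contDiff_const.prodMk contDiff_id)
  have he : ∀ ψ, pd2 f (θ, ψ) = deriv (fun s => f (θ, s)) ψ :=
    fun ψ => ((hasDerivAt_sect2 (hf.differentiable (by simp)) θ ψ).deriv).symm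
  rw [intervalIntegral.integral_congr (fun ψ _ => he ψ)]
  exact integral_deriv_periodic hg hper

/-- `l = ∂_θ c + 2 c cot θ + csc θ ∂_ψ d`. -/
noncomputable def lfun (c d : ℝ → ℝ → ℝ) (θ ψ : ℝ) : ℝ :=
  deriv (fun t => c t ψ) θ + 2 * c θ ψ * (Real.cos θ / Real.sin θ)
    + (Real.sin θ)⁻¹ * deriv (fun s => d θ s) ψ

/-- `l̄ = ∂_θ d + 2 d cot θ − csc θ ∂_ψ c`. -/
noncomputable def lbarfun (c d : ℝ → ℝ → ℝ) (θ ψ : ℝ) : ℝ :=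
  deriv (fun t => d t ψ) θ + 2 * d θ ψ * (Real.cos θ / Real.sin θ)
    - (Real.sin θ)⁻¹ * deriv (fun s => c θ s) ψ

/-- `G = ∂_θ l + l cot θ + csc θ ∂_ψ l̄`. -/
noncomputable def Gfun (c d : ℝ → ℝ → ℝ) (θ ψ : ℝ) : ℝ :=
  deriv (fun t => lfun c d t ψ) θ + lfun c d θ ψ * (Real.cos θ / Real.sin θ)
    + (Real.sin θ)⁻¹ * deriv (fun s => lbarfun c d θ s) ψ

/-- Lemma 6.1 (Lemma L), case ν = 3: under Condition A and Condition B, the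
integral of `G · n^3` over the unit sphere vanishes. -/
theorem integral_G_n3_sphere_eq_zero
    (c d : ℝ → ℝ → ℝ)
    (hc : ContDiff ℝ (⊤ : ℕ∞) (Function.uncurry c))
    (hd : ContDiff ℝ (⊤ : ℕ∞) (Function.uncurry d))
    (hcA : ∀ θ ψ : ℝ, c θ (ψ + 2 * π) = c θ ψ)
    (hdA : ∀ θ ψ : ℝ, d θ (ψ + 2 * π) = d θ ψ)
    (hcB0 : (∫ ψ in (0:ℝ)..(2 * π), c 0 ψ) = 0)
    (hcBpi : (∫ ψ in (0:ℝ)..(2 * π), c π ψ) = 0) :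
    IntegrableOn
        (fun θ : ℝ => Real.sin θ * ∫ ψ in (0:ℝ)..(2 * π), Gfun c d θ ψ * (Real.cos θ))
        (Set.Ioo 0 π) ∧
      ∫ θ in Set.Ioo (0:ℝ) π,
        (∫ ψ in (0:ℝ)..(2 * π), Gfun c d θ ψ * (Real.cos θ)) * Real.sin θ = 0 := by
  have hCd : Differentiable ℝ (Function.uncurry c) := hc.differentiable (by simp)
  have hDd : Differentiable ℝ (Function.uncurry d) := hd.differentiable (by simp)
  -- `F`, `F'`, `F''`
  set F : ℝ → ℝ := fun θ => ∫ ψ in (0:ℝ)..(2 * π), Function.uncurry c (θ, ψ) with hFdef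
  set F1 : ℝ → ℝ := fun θ => ∫ ψ in (0:ℝ)..(2 * π), pd1 (Function.uncurry c) (θ, ψ) with hF1def
  set F2 : ℝ → ℝ :=
    fun θ => ∫ ψ in (0:ℝ)..(2 * π), pd1 (pd1 (Function.uncurry c)) (θ, ψ) with hF2def
  have hF : ∀ θ, HasDerivAt F (F1 θ) θ := fun θ => hasDerivAt_param _ hc _ θ
  have hF1 : ∀ θ, HasDerivAt F1 (F2 θ) θ := fun θ => hasDerivAt_param _ (contDiff_pd1 hc) _ θ
  have hFcont : Continuous F :=
    (Differentiable.continuous (fun θ => (hF θ).differentiableAt))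
  have hF1cont : Continuous F1 :=
    (Differentiable.continuous (fun θ => (hF1 θ).differentiableAt))
  have hF2cont : Continuous F2 := by
    have : Differentiable ℝ F2 := fun θ =>
      (hasDerivAt_param _ (contDiff_pd1 (contDiff_pd1 hc)) _ θ).differentiableAt
    exact this.continuous
  -- periodicity facts
  have perC0 : ∀ θ : ℝ, Function.uncurry c (θ, 2 * π) = Function.uncurry c (θ, 0) := by
    intro θ; simpa using hcA θ 0
  have perD0 : ∀ θ : ℝ, Function.uncurry d (θ, 2 * π) = Function.uncurry d (θ, 0) := by
    intro θ; simpa using hdA θ 0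
  have perC1 : ∀ θ : ℝ, pd1 (Function.uncurry c) (θ, 2 * π) = pd1 (Function.uncurry c) (θ, 0) := by
    intro θ
    have h1 : deriv (fun t => Function.uncurry c (t, 2 * π)) θ
        = pd1 (Function.uncurry c) (θ, 2 * π) := (hasDerivAt_sect1 hCd θ (2 * π)).deriv
    have h2 : deriv (fun t => Function.uncurry c (t, 0)) θ
        = pd1 (Function.uncurry c) (θ, 0) := (hasDerivAt_sect1 hCd θ 0).deriv
    rw [← h1, ← h2]
    congr 1
    funext t
    simpa using hcA t 0
  have perD1 : ∀ θ : ℝ, pd1 (Function.uncurry d) (θ, 2 * π) = pd1 (Function.uncurry d) (θ, 0) := by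
    intro θ
    have h1 : deriv (fun t => Function.uncurry d (t, 2 * π)) θ
        = pd1 (Function.uncurry d) (θ, 2 * π) := (hasDerivAt_sect1 hDd θ (2 * π)).deriv
    have h2 : deriv (fun t => Function.uncurry d (t, 0)) θ
        = pd1 (Function.uncurry d) (θ, 0) := (hasDerivAt_sect1 hDd θ 0).deriv
    rw [← h1, ← h2]
    congr 1
    funext t
    simpa using hdA t 0
  have perC2 : ∀ θ : ℝ, pd2 (Function.uncurry c) (θ, 2 * π) = pd2 (Function.uncurry c) (θ, 0) := by
    intro θ
    have hper : Function.Periodic (fun s => Function.uncurry c (θ, s)) (2 * π) :=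
      fun s => hcA θ s
    have h1 : deriv (fun s => Function.uncurry c (θ, s)) (2 * π)
        = pd2 (Function.uncurry c) (θ, 2 * π) := (hasDerivAt_sect2 hCd θ (2 * π)).deriv
    have h2 : deriv (fun s => Function.uncurry c (θ, s)) 0
        = pd2 (Function.uncurry c) (θ, 0) := (hasDerivAt_sect2 hCd θ 0).deriv
    have hfun : (fun s => Function.uncurry c (θ, s + 2 * π))
        = (fun s => Function.uncurry c (θ, s)) := funext fun s => hcA θ s
    rw [← h1, ← h2]
    calc deriv (fun s => Function.uncurry c (θ, s)) (2 * π)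
        = deriv (fun s => Function.uncurry c (θ, s)) (0 + 2 * π) := by rw [zero_add]
      _ = deriv (fun s => Function.uncurry c (θ, s + 2 * π)) 0 :=
          (deriv_comp_add_const _ _ _).symm
      _ = deriv (fun s => Function.uncurry c (θ, s)) 0 := by rw [hfun]
  -- vanishing ψ-integrals
  have hI_d2 : ∀ θ : ℝ, (∫ ψ in (0:ℝ)..(2 * π), pd2 (Function.uncurry d) (θ, ψ)) = 0 :=
    fun θ => integral_pd2_periodic hd θ (perD0 θ)
  have hI_d21 : ∀ θ : ℝ, (∫ ψ in (0:ℝ)..(2 * π), pd1 (pd2 (Function.uncurry d)) (θ, ψ)) = 0 := by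
    intro θ
    rw [intervalIntegral.integral_congr (fun ψ _ => pd1_pd2_comm hd (θ, ψ))]
    exact integral_pd2_periodic (contDiff_pd1 hd) θ (perD1 θ)
  -- rewriting of `lfun` and `lbarfun` via `pd1`/`pd2`
  have hlfun_eq : ∀ ψ : ℝ, (fun t => lfun c d t ψ)
      = (fun t => pd1 (Function.uncurry c) (t, ψ)
        + 2 * Function.uncurry c (t, ψ) * (Real.cos t / Real.sin t)
        + (Real.sin t)⁻¹ * pd2 (Function.uncurry d) (t, ψ)) := by
    intro ψ
    funext t
    have e1 : deriv (fun t' => c t' ψ) t = pd1 (Function.uncurry c) (t, ψ) :=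
      (hasDerivAt_sect1 hCd t ψ).deriv
    have e2 : deriv (fun s => d t s) ψ = pd2 (Function.uncurry d) (t, ψ) :=
      (hasDerivAt_sect2 hDd t ψ).deriv
    show lfun c d t ψ = _
    rw [lfun, e1, e2]
    rfl
  have hlbar_eq : ∀ θ : ℝ, (fun s => lbarfun c d θ s)
      = (fun s => pd1 (Function.uncurry d) (θ, s)
        + 2 * Function.uncurry d (θ, s) * (Real.cos θ / Real.sin θ)
        - (Real.sin θ)⁻¹ * pd2 (Function.uncurry c) (θ, s)) := by
    intro θ
    funext s
    have e1 : deriv (fun t => d t s) θ = pd1 (Function.uncurry d) (θ, s) :=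
      (hasDerivAt_sect1 hDd θ s).deriv
    have e2 : deriv (fun s' => c θ s') s = pd2 (Function.uncurry c) (θ, s) :=
      (hasDerivAt_sect2 hCd θ s).deriv
    show lbarfun c d θ s = _
    rw [lbarfun, e1, e2]
    rfl
  have hlbar_smooth : ∀ θ : ℝ, ContDiff ℝ (⊤ : ℕ∞) (fun s => lbarfun c d θ s) := by
    intro θ
    rw [hlbar_eq θ]
    have hsect : ContDiff ℝ (⊤ : ℕ∞) (fun s : ℝ => ((θ, s) : ℝ × ℝ)) :=
      contDiff_const.prodMk contDiff_id
    exact (((contDiff_pd1 hd).comp hsect).add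
      ((contDiff_const.mul (hd.comp hsect)).mul contDiff_const)).sub
      (contDiff_const.mul ((contDiff_pd2 hc).comp hsect))
  have hI_lbar : ∀ θ : ℝ, (∫ ψ in (0:ℝ)..(2 * π), deriv (fun s => lbarfun c d θ s) ψ) = 0 := by
    intro θ
    refine integral_deriv_periodic (hlbar_smooth θ) ?_
    have h2 := congrFun (hlbar_eq θ) (2 * π)
    have h0 := congrFun (hlbar_eq θ) 0
    rw [h2, h0, perD0 θ, perD1 θ, perC2 θ]
  -- interval integrability of smooth sections
  have hII : ∀ (f : ℝ × ℝ → ℝ), ContDiff ℝ (⊤ : ℕ∞) f → ∀ θ : ℝ,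
      IntervalIntegrable (fun ψ => f (θ, ψ)) volume 0 (2 * π) := fun f hf θ =>
    (hf.continuous.comp (continuous_const.prodMk continuous_id)).intervalIntegrable 0 (2 * π)
  -- the key pointwise computation of the ψ-integral of G
  have hJ : ∀ θ ∈ Set.Ioo (0:ℝ) π,
      (∫ ψ in (0:ℝ)..(2 * π), Gfun c d θ ψ)
        = F2 θ + 3 * (Real.cos θ / Real.sin θ) * F1 θ - 2 * F θ := by
    intro θ hθ
    have hs : Real.sin θ ≠ 0 := (Real.sin_pos_of_pos_of_lt_pi hθ.1 hθ.2).ne'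
    set K : ℝ := Real.cos θ / Real.sin θ with hK
    set Q : ℝ := (-Real.sin θ * Real.sin θ - Real.cos θ * Real.cos θ) / Real.sin θ ^ 2 with hQ
    set R : ℝ := -Real.cos θ / Real.sin θ ^ 2 with hR
    -- derivative of t ↦ lfun c d t ψ
    have hderiv_l : ∀ ψ : ℝ, deriv (fun t => lfun c d t ψ) θ
        = pd1 (pd1 (Function.uncurry c)) (θ, ψ)
          + (2 * pd1 (Function.uncurry c) (θ, ψ) * K
              + 2 * Function.uncurry c (θ, ψ) * Q)
          + (R * pd2 (Function.uncurry d) (θ, ψ)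
              + (Real.sin θ)⁻¹ * pd1 (pd2 (Function.uncurry d)) (θ, ψ)) := by
      intro ψ
      have h_a : HasDerivAt (fun t => pd1 (Function.uncurry c) (t, ψ))
          (pd1 (pd1 (Function.uncurry c)) (θ, ψ)) θ :=
        hasDerivAt_sect1 ((contDiff_pd1 hc).differentiable (by simp)) θ ψ
      have h_b : HasDerivAt (fun t => Function.uncurry c (t, ψ))
          (pd1 (Function.uncurry c) (θ, ψ)) θ := hasDerivAt_sect1 hCd θ ψ
      have h_cot : HasDerivAt (fun t => Real.cos t / Real.sin t) Q θ := by
        simpa [hQ] using (Real.hasDerivAt_cos θ).fun_div (Real.hasDerivAt_sin θ) hs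
      have h_csc : HasDerivAt (fun t => (Real.sin t)⁻¹) R θ := by
        simpa [hR] using (Real.hasDerivAt_sin θ).fun_inv hs
      have h_d2 : HasDerivAt (fun t => pd2 (Function.uncurry d) (t, ψ))
          (pd1 (pd2 (Function.uncurry d)) (θ, ψ)) θ :=
        hasDerivAt_sect1 ((contDiff_pd2 hd).differentiable (by simp)) θ ψ
      have hL := (h_a.add (((h_b.const_mul 2).mul h_cot))).add (h_csc.mul h_d2)
      rw [hlfun_eq ψ]
      exact hL.deriv
    -- pointwise decomposition of G
    have hGpt : ∀ ψ : ℝ, Gfun c d θ ψ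
        = pd1 (pd1 (Function.uncurry c)) (θ, ψ)
          + 3 * K * pd1 (Function.uncurry c) (θ, ψ)
          + ((2 * Q + 2 * K ^ 2) * Function.uncurry c (θ, ψ)
            + ((R + (Real.sin θ)⁻¹ * K) * pd2 (Function.uncurry d) (θ, ψ)
              + ((Real.sin θ)⁻¹ * pd1 (pd2 (Function.uncurry d)) (θ, ψ)
                + (Real.sin θ)⁻¹ * deriv (fun s => lbarfun c d θ s) ψ))) := by
      intro ψ
      rw [Gfun, hderiv_l ψ, congrFun (hlfun_eq ψ) θ]
      ring
    -- integrate term by term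
    have i1 := hII _ (contDiff_pd1 (contDiff_pd1 hc)) θ
    have i2 : IntervalIntegrable
        (fun ψ => 3 * K * pd1 (Function.uncurry c) (θ, ψ)) volume 0 (2 * π) :=
      (hII _ (contDiff_pd1 hc) θ).const_mul _
    have i3 : IntervalIntegrable
        (fun ψ => (2 * Q + 2 * K ^ 2) * Function.uncurry c (θ, ψ)) volume 0 (2 * π) :=
      (hII _ hc θ).const_mul _
    have i4 : IntervalIntegrable
        (fun ψ => (R + (Real.sin θ)⁻¹ * K) * pd2 (Function.uncurry d) (θ, ψ)) volume 0 (2 * π) :=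
      (hII _ (contDiff_pd2 hd) θ).const_mul _
    have i5 : IntervalIntegrable
        (fun ψ => (Real.sin θ)⁻¹ * pd1 (pd2 (Function.uncurry d)) (θ, ψ)) volume 0 (2 * π) :=
      (hII _ (contDiff_pd1 (contDiff_pd2 hd)) θ).const_mul _
    have i6 : IntervalIntegrable
        (fun ψ => (Real.sin θ)⁻¹ * deriv (fun s => lbarfun c d θ s) ψ) volume 0 (2 * π) :=
      (((hlbar_smooth θ).continuous_deriv (by simp)).intervalIntegrable 0 (2 * π)).const_mul _
    calc (∫ ψ in (0:ℝ)..(2 * π), Gfun c d θ ψ)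
        = ∫ ψ in (0:ℝ)..(2 * π),
            (pd1 (pd1 (Function.uncurry c)) (θ, ψ)
              + 3 * K * pd1 (Function.uncurry c) (θ, ψ)
              + ((2 * Q + 2 * K ^ 2) * Function.uncurry c (θ, ψ)
                + ((R + (Real.sin θ)⁻¹ * K) * pd2 (Function.uncurry d) (θ, ψ)
                  + ((Real.sin θ)⁻¹ * pd1 (pd2 (Function.uncurry d)) (θ, ψ)
                    + (Real.sin θ)⁻¹ * deriv (fun s => lbarfun c d θ s) ψ)))) :=
          intervalIntegral.integral_congr (fun ψ _ => hGpt ψ)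
      _ = F2 θ + 3 * K * F1 θ + ((2 * Q + 2 * K ^ 2) * F θ
            + ((R + (Real.sin θ)⁻¹ * K) * 0 + ((Real.sin θ)⁻¹ * 0 + (Real.sin θ)⁻¹ * 0))) := by
          rw [intervalIntegral.integral_add (i1.add i2) (i3.add (i4.add (i5.add i6))),
            intervalIntegral.integral_add i1 i2,
            intervalIntegral.integral_add i3 (i4.add (i5.add i6)),
            intervalIntegral.integral_add i4 (i5.add i6),
            intervalIntegral.integral_add i5 i6,
            intervalIntegral.integral_const_mul, intervalIntegral.integral_const_mul,
            intervalIntegral.integral_const_mul, intervalIntegral.integral_const_mul,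
            intervalIntegral.integral_const_mul,
            hI_d2 θ, hI_d21 θ, hI_lbar θ]
      _ = F2 θ + 3 * K * F1 θ + (2 * Q + 2 * K ^ 2) * F θ := by ring
      _ = F2 θ + 3 * K * F1 θ - 2 * F θ := by
          have hQK : 2 * Q + 2 * K ^ 2 = -2 := by
            rw [hQ, hK]
            field_simp
            nlinarith [Real.sin_sq_add_cos_sq θ]
          rw [hQK]
          ring
  -- the everywhere-defined smooth substitute for the integrand
  set g0 : ℝ → ℝ := fun θ => Real.cos θ * Real.sin θ * F2 θ
      + 3 * Real.cos θ ^ 2 * F1 θ - 2 * Real.sin θ * Real.cos θ * F θ with hg0def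
  have hg0cont : Continuous g0 := by
    apply Continuous.sub
    · exact ((continuous_cos.mul continuous_sin).mul hF2cont).add
        ((continuous_const.mul (continuous_cos.pow 2)).mul hF1cont)
    · exact ((continuous_const.mul continuous_sin).mul continuous_cos).mul hFcont
  have hmain : ∀ θ ∈ Set.Ioo (0:ℝ) π,
      (∫ ψ in (0:ℝ)..(2 * π), Gfun c d θ ψ * Real.cos θ) * Real.sin θ = g0 θ := by
    intro θ hθ
    rw [intervalIntegral.integral_mul_const, hJ θ hθ]
    have hs : Real.sin θ ≠ 0 := (Real.sin_pos_of_pos_of_lt_pi hθ.1 hθ.2).ne'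
    rw [hg0def]
    field_simp
  -- the antiderivative
  have hA : ∀ θ : ℝ, HasDerivAt
      (fun θ => Real.cos θ * Real.sin θ * F1 θ + (1 + Real.cos θ ^ 2) * F θ) (g0 θ) θ := by
    intro θ
    have h1 := ((Real.hasDerivAt_cos θ).fun_mul (Real.hasDerivAt_sin θ)).fun_mul (hF1 θ)
    have h2 := ((hasDerivAt_const θ (1:ℝ)).fun_add ((Real.hasDerivAt_cos θ).fun_pow 2)).fun_mul (hF θ)
    have h3 := h1.fun_add h2
    refine h3.congr_deriv ?_
    symm
    rw [hg0def]
    push_cast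
    have hpy := Real.sin_sq_add_cos_sq θ
    linear_combination F1 θ * hpy
  -- integrability and value of the integral
  have hEqOn : Set.EqOn
      (fun θ => (∫ ψ in (0:ℝ)..(2 * π), Gfun c d θ ψ * Real.cos θ) * Real.sin θ) g0
      (Set.Ioo 0 π) := fun θ hθ => hmain θ hθ
  have hg0int : IntegrableOn g0 (Set.Ioo 0 π) :=
    (hg0cont.integrableOn_Icc).mono_set Set.Ioo_subset_Icc_self
  constructor
  · refine (hg0int.congr_fun ?_ measurableSet_Ioo)
    intro θ hθ
    rw [← hmain θ hθ]
    ring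
  · rw [setIntegral_congr_fun measurableSet_Ioo hEqOn]
    have h1 : (∫ θ in Set.Ioo (0:ℝ) π, g0 θ) = ∫ θ in (0:ℝ)..π, g0 θ := by
      rw [intervalIntegral.integral_of_le Real.pi_pos.le, ← integral_Ioc_eq_integral_Ioo]
    rw [h1, intervalIntegral.integral_eq_sub_of_hasDerivAt (fun x _ => hA x)
      (hg0cont.intervalIntegrable 0 π)]
    have hFpi : F π = 0 := hcBpi
    have hF0 : F 0 = 0 := hcB0
    simp [hFpi, hF0, Real.sin_pi, Real.cos_pi, Real.sin_zero, Real.cos_zero]
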